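/- Let (S, R, k) be a detailed-balanced reaction system with point of detailed balance q ∈ R^S_{>0}, and let Γ ⊂ Z^S_{≥0} be a reachability class of the associated stochastic mass-action Markov chain with Σ_{n∈Γ} q^n/n! < ∞. Then the distribution π on Γ given by π(n) ∝ q^n/n! satisfies the detailed balance equations of the Markov chain: for every n ∈ Γ and every reaction y → y' ∈ R with y ≤ n componentwise, π(n)·λ(n → n + y' − y) = π(n + y' − y)·λ(n + y' − y → n), where λ(n → n + y' − y) = k(y → y')·n!/(n − y)!. In particular, π is a stationary distribution on Γ. -/
import Mathlib


/-- One step of a reaction network. -/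
def RxnStep {S : Type} (R : Finset ((S → ℕ) × (S → ℕ))) (n n' : S → ℕ) : Prop :=
  ∃ r ∈ R, (∀ i, r.1 i ≤ n i) ∧ (∀ i, (n' i : ℤ) = (n i : ℤ) + r.2 i - r.1 i)

/-- Reachability. -/
def RxnReach {S : Type} (R : Finset ((S → ℕ) × (S → ℕ))) : (S → ℕ) → (S → ℕ) → Prop :=
  Relation.ReflTransGen (RxnStep R)

/-- Unnormalized stationary weight `q^n / n!`. -/
noncomputable def poissonWt {S : Type} [Fintype S] (q : S → ℝ) (n : S → ℕ) : ℝ :=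
  ∏ i, q i ^ n i / (Nat.factorial (n i))

/-- Per-coordinate identity: `q^(m+a)/(m+a)! * (m+a)⁽ᵃ⁾ = (q^m/m!) * q^a`. -/
lemma coord_key (q : ℝ) (m a : ℕ) :
    q ^ (m + a) / ((m + a).factorial : ℝ) * ((m + a).descFactorial a : ℝ)
      = q ^ m / (m.factorial : ℝ) * q ^ a := by
  have h : (m : ℕ).factorial * (m + a).descFactorial a = (m + a).factorial := by
    have := Nat.factorial_mul_descFactorial (n := m + a) (k := a) (Nat.le_add_left a m)
    simpa using this
  have hcast : ((m).factorial : ℝ) * ((m + a).descFactorial a : ℝ)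
      = ((m + a).factorial : ℝ) := by exact_mod_cast congrArg (Nat.cast : ℕ → ℝ) h
  have hm : ((m).factorial : ℝ) ≠ 0 := by positivity
  have hma : (((m + a)).factorial : ℝ) ≠ 0 := by positivity
  field_simp
  rw [← hcast, pow_add]
  ring

/-- for a detailed-balanced reaction system with point of detailed
balance `q`, the distribution `π(n) ∝ q^n/n!` on a reachability class `Γ`
(with finite normalizer) satisfies the detailed balance equations of the
stochastic mass-action Markov chain: for `n ∈ Γ` and a reaction `y → y'` with
`y ≤ n`, `π(n)·k(y→y')·n!/(n−y)! = π(n+y'−y)·k(y'→y)·(n+y'−y)!/((n+y'−y)−y')!`. -/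
theorem stationary_detailed_balance {S : Type} [Fintype S]
    (R : Finset ((S → ℕ) × (S → ℕ)))
    (hrev : ∀ r ∈ R, (r.2, r.1) ∈ R)
    (k : ((S → ℕ) × (S → ℕ)) → ℝ) (hkpos : ∀ r ∈ R, 0 < k r)
    (q : S → ℝ) (hq : ∀ i, 0 < q i)
    (hdb : ∀ r ∈ R, k r * ∏ i, q i ^ r.1 i = k (r.2, r.1) * ∏ i, q i ^ r.2 i)
    (n₀ : S → ℕ) (Γ : Set (S → ℕ)) (hΓ : Γ = {n | RxnReach R n₀ n})
    (hsum : Summable fun n => Set.indicator Γ (poissonWt q) n)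
    (Z : ℝ) (hZ : Z = ∑' n, Set.indicator Γ (poissonWt q) n)
    (π : (S → ℕ) → ℝ) (hπ : π = fun n => Set.indicator Γ (poissonWt q) n / Z) :
    ∀ n ∈ Γ, ∀ r ∈ R, (∀ i, r.1 i ≤ n i) →
      π n * (k r * ∏ i, ((n i).descFactorial (r.1 i) : ℝ))
        = π (fun i => n i + r.2 i - r.1 i) *
            (k (r.2, r.1) *
              ∏ i, ((n i + r.2 i - r.1 i).descFactorial (r.2 i) : ℝ)) := by
  intro n hn r hr hle
  set n' : S → ℕ := fun i => n i + r.2 i - r.1 i with hn'def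
  have hn' : n' ∈ Γ := by
    rw [hΓ]
    rw [hΓ] at hn
    exact Relation.ReflTransGen.tail hn
      ⟨r, hr, hle, fun i => by have := hle i; simp [hn'def]; omega⟩
  -- reduce to the unnormalized identity
  have key : poissonWt q n * (k r * ∏ i, ((n i).descFactorial (r.1 i) : ℝ))
      = poissonWt q n' * (k (r.2, r.1) * ∏ i, ((n' i).descFactorial (r.2 i) : ℝ)) := by
    have hn1 : ∀ i, n i = (n i - r.1 i) + r.1 i := fun i => by have := hle i; omega
    have hn2 : ∀ i, n' i = (n i - r.1 i) + r.2 i := fun i => by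
      have := hle i; simp [hn'def]; omega
    have e1 : poissonWt q n * ∏ i, ((n i).descFactorial (r.1 i) : ℝ)
        = (∏ i, q i ^ (n i - r.1 i) / ((n i - r.1 i).factorial : ℝ)) * ∏ i, q i ^ r.1 i := by
      rw [poissonWt, ← Finset.prod_mul_distrib, ← Finset.prod_mul_distrib]
      refine Finset.prod_congr rfl fun i _ => ?_
      conv_lhs => rw [hn1 i]
      exact coord_key (q i) (n i - r.1 i) (r.1 i)
    have e2 : poissonWt q n' * ∏ i, ((n' i).descFactorial (r.2 i) : ℝ)
        = (∏ i, q i ^ (n i - r.1 i) / ((n i - r.1 i).factorial : ℝ)) * ∏ i, q i ^ r.2 i := by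
      rw [poissonWt, ← Finset.prod_mul_distrib, ← Finset.prod_mul_distrib]
      refine Finset.prod_congr rfl fun i _ => ?_
      conv_lhs => rw [hn2 i]
      exact coord_key (q i) (n i - r.1 i) (r.2 i)
    calc poissonWt q n * (k r * ∏ i, ((n i).descFactorial (r.1 i) : ℝ))
        = (poissonWt q n * ∏ i, ((n i).descFactorial (r.1 i) : ℝ)) * k r := by ring
      _ = (∏ i, q i ^ (n i - r.1 i) / ((n i - r.1 i).factorial : ℝ))
            * (k r * ∏ i, q i ^ r.1 i) := by rw [e1]; ring
      _ = (∏ i, q i ^ (n i - r.1 i) / ((n i - r.1 i).factorial : ℝ))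
            * (k (r.2, r.1) * ∏ i, q i ^ r.2 i) := by rw [hdb r hr]
      _ = (poissonWt q n' * ∏ i, ((n' i).descFactorial (r.2 i) : ℝ)) * k (r.2, r.1) := by
            rw [e2]; ring
      _ = poissonWt q n' * (k (r.2, r.1) * ∏ i, ((n' i).descFactorial (r.2 i) : ℝ)) := by ring
  rw [hπ]
  simp only [Set.indicator_of_mem hn, Set.indicator_of_mem hn']
  rw [div_mul_eq_mul_div, div_mul_eq_mul_div, key]
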